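/- For α ∈ (0,1), the function g_α(t) = Σ_{n=1}^∞ 2^{−nα} sin(2^n π t) is α-Hölder continuous on ℝ: there exists L' > 0 such that |g_α(t) − g_α(s)| ≤ L'|t − s|^α for all s, t ∈ ℝ. -/

import Mathlib

open Real

lemma sin_diff_bound (x y : ℝ) : |Real.sin x - Real.sin y| ≤ min 2 |x - y| := by
  refine le_min ?_ ?_
  · calc |sin x - sin y| ≤ |sin x| + |sin y| := abs_sub _ _
      _ ≤ 1 + 1 := add_le_add (abs_sin_le_one x) (abs_sin_le_one y)
      _ = 2 := by norm_num
  · rw [Real.sin_sub_sin]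
    have h1 : |sin ((x-y)/2)| ≤ |(x-y)/2| := abs_sin_le_abs
    have h2 : |cos ((x+y)/2)| ≤ 1 := abs_cos_le_one _
    calc |2 * sin ((x-y)/2) * cos ((x+y)/2)| = 2 * |sin ((x-y)/2)| * |cos ((x+y)/2)| := by
          rw [abs_mul, abs_mul]; norm_num
      _ ≤ 2 * |(x-y)/2| * 1 :=
          mul_le_mul (by linarith) h2 (abs_nonneg _) (by positivity)
      _ = |x - y| := by rw [abs_div, abs_two]; ring

lemma weierstrass_key (α : ℝ) (hα0 : 0 < α) (hα1 : α < 1) :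
    ∃ L > 0, ∀ h : ℝ, 0 < h →
      ∑' n : ℕ, ((2:ℝ)^(-α))^(n+1) * min 2 ((2:ℝ)^(n+1) * π * h) ≤ L * h ^ α := by
  set c : ℝ := (2:ℝ)^(-α) with hc
  have hc0 : 0 < c := Real.rpow_pos_of_pos (by norm_num) _
  have hc1 : c < 1 := Real.rpow_lt_one_of_one_lt_of_neg (by norm_num) (by linarith)
  set r : ℝ := (2:ℝ)^(1-α) with hr
  have hr1 : 1 < r := by
    rw [hr]
    exact (Real.one_lt_rpow_iff_of_pos (by norm_num)).mpr (Or.inl ⟨by norm_num, by linarith⟩)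
  have hr0 : 0 < r := lt_trans one_pos hr1
  have hgeo : Summable (fun n : ℕ => c^(n+1)) := by
    simpa [pow_succ, mul_comm] using (summable_geometric_of_lt_one hc0.le hc1).mul_left c
  have hcr : c * 2 = r := by
    rw [hc, hr, show (1:ℝ) - α = -α + 1 by ring, Real.rpow_add (by norm_num), Real.rpow_one]
  refine ⟨π * r / (r - 1) + 2 / (1 - c),
    add_pos (div_pos (mul_pos Real.pi_pos hr0) (by linarith)) (div_pos two_pos (by linarith)), ?_⟩
  intro h hh
  set N : ℕ := Nat.floor (Real.logb 2 (1/h)) with hN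
  set b : ℕ → ℝ := fun n => c^(n+1) * min 2 ((2:ℝ)^(n+1) * π * h) with hb
  have hb_nonneg : ∀ n, 0 ≤ b n := fun n => by
    have : (0:ℝ) ≤ min 2 ((2:ℝ)^(n+1) * π * h) :=
      le_min (by norm_num) (by positivity)
    positivity
  have hb_le : ∀ n, b n ≤ 2 * c^(n+1) := fun n => by
    rw [hb, mul_comm (2:ℝ)]
    exact mul_le_mul_of_nonneg_left (min_le_left _ _) (by positivity)
  have hb_sum : Summable b := Summable.of_nonneg_of_le hb_nonneg hb_le (hgeo.mul_left 2)
  -- key numeric facts about N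
  have hhalf : ((2:ℝ)^(N+1))⁻¹ ≤ h := by
    have hlt : Real.logb 2 (1/h) < (N:ℝ) + 1 := by
      have := Nat.lt_floor_add_one (Real.logb 2 (1/h))
      push_cast at this ⊢; linarith
    have h1 : 1/h < (2:ℝ)^((N:ℝ)+1) := by
      calc 1/h = (2:ℝ) ^ (Real.logb 2 (1/h)) := (Real.rpow_logb (by norm_num) (by norm_num) (by positivity)).symm
        _ < (2:ℝ)^((N:ℝ)+1) := Real.rpow_lt_rpow_of_exponent_lt (by norm_num) hlt
    have h2 : 1/h < (2:ℝ)^(N+1) := by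
      rwa [show ((N:ℝ)+1) = ((N+1 : ℕ):ℝ) by push_cast; ring, Real.rpow_natCast] at h1
    have hK : (0:ℝ) < (2:ℝ)^(N+1) := by positivity
    rw [inv_le_comm₀ hK hh] at *
    rw [one_div] at h2
    linarith
  -- tail bound
  have htail : ∑' n : ℕ, b (n + N) ≤ 2 / (1 - c) * h ^ α := by
    have hcN : c^(N+1) ≤ h ^ α := by
      have heq : c^(N+1) = (((2:ℝ)^(N+1))⁻¹) ^ α := by
        rw [← Real.rpow_natCast c (N+1), ← Real.rpow_natCast (2:ℝ) (N+1), hc,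
          ← Real.rpow_mul (by norm_num : (0:ℝ) ≤ 2),
          ← Real.rpow_neg (by norm_num : (0:ℝ) ≤ 2),
          ← Real.rpow_mul (by norm_num : (0:ℝ) ≤ 2)]
        congr 1
        push_cast
        ring
      rw [heq]
      exact Real.rpow_le_rpow (by positivity) hhalf hα0.le
    have hsum2 : Summable (fun n : ℕ => 2 * c^(n + N + 1)) := by
      have : (fun n : ℕ => 2 * c^(n + N + 1)) = fun n : ℕ => (2 * c^N) * c^(n+1) := by
        funext n; ring
      rw [this]; exact hgeo.mul_left _
    calc ∑' n : ℕ, b (n + N) ≤ ∑' n : ℕ, 2 * c^(n + N + 1) := by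
          refine Summable.tsum_le_tsum (fun n => ?_) ((summable_nat_add_iff N).mpr hb_sum) hsum2
          simpa using hb_le (n + N)
      _ = (2 * c^N) * ∑' n : ℕ, c^(n+1) := by
          rw [← tsum_mul_left]; congr 1; funext n; ring
      _ = (2 * c^N) * (c * (1-c)⁻¹) := by
          congr 1
          rw [show (fun n : ℕ => c^(n+1)) = fun n : ℕ => c * c^n from funext fun n => by ring,
            tsum_mul_left, tsum_geometric_of_lt_one hc0.le hc1]
      _ = 2 / (1-c) * c^(N+1) := by field_simp; ring
      _ ≤ 2 / (1 - c) * h ^ α :=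
          mul_le_mul_of_nonneg_left hcN (div_nonneg (by norm_num) (by linarith))
  -- head bound
  have hhead : ∑ n ∈ Finset.range N, b n ≤ π * r / (r - 1) * h ^ α := by
    rcases Nat.eq_zero_or_pos N with hN0 | hNpos
    · rw [hN0]
      simp only [Finset.range_zero, Finset.sum_empty]
      exact mul_nonneg (div_nonneg (mul_nonneg Real.pi_pos.le hr0.le) (by linarith))
        (Real.rpow_nonneg hh.le α)
    · -- 2^N ≤ 1/h
      have hlogb : (1:ℝ) ≤ Real.logb 2 (1/h) := by
        by_contra hcon
        push_neg at hcon
        have : N = 0 := Nat.floor_eq_zero.mpr hcon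
        omega
      have hfl : (N:ℝ) ≤ Real.logb 2 (1/h) := Nat.floor_le (by linarith)
      have h2N : (2:ℝ)^N ≤ 1/h := by
        calc (2:ℝ)^N = (2:ℝ)^((N:ℕ):ℝ) := (Real.rpow_natCast 2 N).symm
          _ ≤ (2:ℝ)^(Real.logb 2 (1/h)) := Real.rpow_le_rpow_of_exponent_le (by norm_num) hfl
          _ = 1/h := Real.rpow_logb (by norm_num) (by norm_num) (by positivity)
      have h2N1 : (2:ℝ)^(N+1) ≤ 2/h := by
        rw [pow_succ]
        calc (2:ℝ)^N * 2 ≤ (1/h) * 2 := by nlinarith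
          _ = 2/h := by ring
      have hrN : r^(N+1) ≤ r / (h ^ (1-α)) := by
        have e1 : r^(N+1) = ((2:ℝ)^(N+1) : ℝ) ^ (1-α) := by
          rw [← Real.rpow_natCast r (N+1), ← Real.rpow_natCast (2:ℝ) (N+1), hr,
            ← Real.rpow_mul (by norm_num), ← Real.rpow_mul (by norm_num), mul_comm]
        have e2 : ((2:ℝ)^(N+1) : ℝ) ^ (1-α) ≤ ((2:ℝ)/h) ^ (1-α) :=
          Real.rpow_le_rpow (by positivity) h2N1 (by linarith)
        have e3 : ((2:ℝ)/h) ^ (1-α) = r / h ^ (1-α) := by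
          rw [Real.div_rpow (by norm_num) hh.le, hr]
        rw [e1]; rw [e3] at e2; exact e2
      have hgs : ∑ n ∈ Finset.range N, r^(n+1) ≤ r^(N+1) / (r - 1) := by
        have : ∑ n ∈ Finset.range N, r^(n+1) = r * ((r^N - 1)/(r-1)) := by
          rw [← geom_sum_eq (by linarith : r ≠ 1) N, Finset.mul_sum]
          congr 1; funext n; ring
        have hr1' : (0:ℝ) < r - 1 := by linarith
        have hrN0 : (0:ℝ) < r^N := by positivity
        rw [this, le_div_iff₀ hr1']
        have he : r * ((r^N-1)/(r-1)) * (r-1) = r * (r^N - 1) := by field_simp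
        rw [he, pow_succ]
        nlinarith
      have hha : h * (h ^ (1-α))⁻¹ = h ^ α := by
        have e : h * (h ^ (1-α))⁻¹ = h ^ (1:ℝ) * h ^ (-(1-α)) := by
          rw [Real.rpow_one, Real.rpow_neg hh.le]
        rw [e, ← Real.rpow_add hh, show (1:ℝ) + -(1-α) = α by ring]
      calc ∑ n ∈ Finset.range N, b n
          ≤ ∑ n ∈ Finset.range N, (π * h) * r^(n+1) := by
            refine Finset.sum_le_sum fun n _ => ?_
            rw [hb]
            calc c^(n+1) * min 2 ((2:ℝ)^(n+1) * π * h)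
                ≤ c^(n+1) * ((2:ℝ)^(n+1) * π * h) :=
                  mul_le_mul_of_nonneg_left (min_le_right _ _) (by positivity)
              _ = (π * h) * (c*2)^(n+1) := by rw [mul_pow]; ring
              _ = (π * h) * r^(n+1) := by rw [hcr]
        _ = (π * h) * ∑ n ∈ Finset.range N, r^(n+1) := by rw [Finset.mul_sum]
        _ ≤ (π * h) * (r^(N+1) / (r - 1)) := by
            exact mul_le_mul_of_nonneg_left hgs (by positivity)
        _ ≤ (π * h) * ((r / h ^ (1-α)) / (r - 1)) := by
            refine mul_le_mul_of_nonneg_left ?_ (by positivity)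
            exact div_le_div_of_nonneg_right hrN (by linarith)
        _ = π * r / (r - 1) * (h * (h ^ (1-α))⁻¹) := by
            field_simp
        _ = π * r / (r - 1) * h ^ α := by rw [hha]
  calc ∑' n : ℕ, b n = ∑ n ∈ Finset.range N, b n + ∑' n : ℕ, b (n + N) :=
        (Summable.sum_add_tsum_nat_add N hb_sum).symm
    _ ≤ π * r / (r - 1) * h ^ α + 2 / (1 - c) * h ^ α := add_le_add hhead htail
    _ = (π * r / (r - 1) + 2 / (1 - c)) * h ^ α := by ring

/-- The high-frequency Weierstrass-type series `g_α(t) = ∑_{n ≥ 1} 2^{-nα} sin(2^n π t)`. -/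
noncomputable def weierstrassG (α t : ℝ) : ℝ :=
  ∑' n : ℕ, (2 : ℝ) ^ (-((n : ℝ) + 1) * α) * Real.sin ((2 : ℝ) ^ (n + 1) * π * t)

theorem weierstrassG_holder (α : ℝ) (hα : α ∈ Set.Ioo (0 : ℝ) 1) :
    ∃ L' > 0, ∀ s t : ℝ, |weierstrassG α t - weierstrassG α s| ≤ L' * |t - s| ^ α := by
  obtain ⟨hα0, hα1⟩ := hα
  obtain ⟨L, hL, hLb⟩ := weierstrass_key α hα0 hα1
  set c : ℝ := (2:ℝ)^(-α) with hc
  have hc0 : 0 < c := Real.rpow_pos_of_pos (by norm_num) _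
  have hc1 : c < 1 := Real.rpow_lt_one_of_one_lt_of_neg (by norm_num) (by linarith)
  have hgeo : Summable (fun n : ℕ => c^(n+1)) := by
    simpa [pow_succ, mul_comm] using (summable_geometric_of_lt_one hc0.le hc1).mul_left c
  have hpow : ∀ n : ℕ, (2:ℝ)^(-((n:ℝ)+1)*α) = c^(n+1) := by
    intro n
    rw [← Real.rpow_natCast c (n+1), hc, ← Real.rpow_mul (by norm_num : (0:ℝ) ≤ 2)]
    congr 1; push_cast; ring
  have hsumm : ∀ u : ℝ, Summable
      (fun n : ℕ => (2:ℝ)^(-((n:ℝ)+1)*α) * Real.sin ((2:ℝ)^(n+1)*π*u)) := by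
    intro u
    refine Summable.of_norm_bounded hgeo fun n => ?_
    have h1 : |(2:ℝ)^(-((n:ℝ)+1)*α)| = c^(n+1) := by
      rw [hpow n, abs_of_pos (by positivity)]
    rw [Real.norm_eq_abs, abs_mul, h1]
    exact mul_le_of_le_one_right (by positivity) (abs_sin_le_one _)
  refine ⟨L, hL, fun s t => ?_⟩
  by_cases hst : t = s
  · simp [hst, Real.zero_rpow hα0.ne']
  · set h : ℝ := |t - s| with hdef
    have hh : 0 < h := abs_pos.mpr (sub_ne_zero.mpr hst)
    set d : ℕ → ℝ := fun n =>
      (2:ℝ)^(-((n:ℝ)+1)*α) * Real.sin ((2:ℝ)^(n+1)*π*t)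
        - (2:ℝ)^(-((n:ℝ)+1)*α) * Real.sin ((2:ℝ)^(n+1)*π*s) with hd
    have hdb : ∀ n : ℕ, |d n| ≤ c^(n+1) * min 2 ((2:ℝ)^(n+1) * π * h) := by
      intro n
      have hXY : |(2:ℝ)^(n+1)*π*t - (2:ℝ)^(n+1)*π*s| = (2:ℝ)^(n+1) * π * h := by
        rw [show (2:ℝ)^(n+1)*π*t - (2:ℝ)^(n+1)*π*s = ((2:ℝ)^(n+1)*π) * (t - s) by ring,
          abs_mul, abs_of_pos (by positivity), hdef]
      calc |d n| = c^(n+1) * |Real.sin ((2:ℝ)^(n+1)*π*t) - Real.sin ((2:ℝ)^(n+1)*π*s)| := by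
            rw [hd]
            simp only
            rw [← mul_sub, abs_mul, hpow n, abs_of_pos (by positivity)]
        _ ≤ c^(n+1) * min 2 |(2:ℝ)^(n+1)*π*t - (2:ℝ)^(n+1)*π*s| :=
            mul_le_mul_of_nonneg_left (sin_diff_bound _ _) (by positivity)
        _ = c^(n+1) * min 2 ((2:ℝ)^(n+1) * π * h) := by rw [hXY]
    have hble : ∀ n : ℕ, c^(n+1) * min 2 ((2:ℝ)^(n+1) * π * h) ≤ 2 * c^(n+1) := fun n => by
      rw [mul_comm (2:ℝ)]
      exact mul_le_mul_of_nonneg_left (min_le_left _ _) (by positivity)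
    have habs_sum : Summable (fun n : ℕ => |d n|) :=
      Summable.of_nonneg_of_le (fun n => abs_nonneg _)
        (fun n => (hdb n).trans (hble n)) (hgeo.mul_left 2)
    have hb_nonneg : ∀ n : ℕ, 0 ≤ c^(n+1) * min 2 ((2:ℝ)^(n+1) * π * h) := fun n => by
      have : (0:ℝ) ≤ min 2 ((2:ℝ)^(n+1) * π * h) := le_min (by norm_num) (by positivity)
      positivity
    have hb_sum : Summable (fun n : ℕ => c^(n+1) * min 2 ((2:ℝ)^(n+1) * π * h)) :=
      Summable.of_nonneg_of_le hb_nonneg hble (hgeo.mul_left 2)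
    have hdiff : weierstrassG α t - weierstrassG α s = ∑' n, d n := by
      unfold weierstrassG
      exact (Summable.tsum_sub (hsumm t) (hsumm s)).symm
    rw [hdiff]
    calc |∑' n, d n| ≤ ∑' n, |d n| := by
          simpa [Real.norm_eq_abs] using
            norm_tsum_le_tsum_norm (f := d) (by simpa [Real.norm_eq_abs] using habs_sum)
      _ ≤ ∑' n : ℕ, c^(n+1) * min 2 ((2:ℝ)^(n+1) * π * h) :=
          Summable.tsum_le_tsum hdb habs_sum hb_sum
      _ ≤ L * h ^ α := hLb h hh
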